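/- Let I be a nil two-sided ideal of a ring R (every element of I is nilpotent). Then R is a CSNC ring if and only if the quotient ring R/I is a CSNC ring. -/

import Mathlib

/-- An element `a` of a ring is *clean* if `a = e + u` for some idempotent `e` and unit `u`. -/
def IsCleanElem {R : Type*} [Ring R] (a : R) : Prop :=
  ∃ e u : R, IsIdempotentElem e ∧ IsUnit u ∧ a = e + u

/-- An element `a` of a ring is *strongly nil-clean* if `a = e + q` for some idempotent `e`
and nilpotent `q` with `e * q = q * e`. -/
def IsStronglyNilCleanElem {R : Type*} [Ring R] (a : R) : Prop :=
  ∃ e q : R, IsIdempotentElem e ∧ IsNilpotent q ∧ e * q = q * e ∧ a = e + q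

/-- A ring is a *CSNC ring* if every clean element is strongly nil-clean. -/
def IsCSNCRing (R : Type*) [Ring R] : Prop :=
  ∀ a : R, IsCleanElem a → IsStronglyNilCleanElem a

/-!
An element `a` is strongly nil-clean exactly when `a - a ^ 2` is nilpotent: the idempotent is
`1 - (1 - a ^ n) ^ n`, a polynomial in `a` that is congruent to `a` modulo `a - a ^ 2`.
Along a surjection `f` with nil kernel both halves of "clean" lift (idempotents by the classical
lifting argument, units because `u * v` and `v * u` are units once `f (u * v) = f (v * u) = 1`),
while `a - a ^ 2` is nilpotent iff `f (a - a ^ 2)` is.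
-/

open Polynomial

theorem X_sub_X_sq_dvd_X_sub_one_sub_one_sub_X_pow_pow (n : ℕ) :
    (X - X ^ 2 : ℤ[X]) ∣ X - (1 - (1 - X ^ (n + 1)) ^ (n + 1)) := by
  rw [← Ideal.mem_span_singleton, ← Ideal.Quotient.eq_zero_iff_mem]
  have hX : IsIdempotentElem (Ideal.Quotient.mk (Ideal.span {(X - X ^ 2 : ℤ[X])}) X) := by
    rw [IsIdempotentElem, ← map_mul, Ideal.Quotient.eq]
    exact Ideal.mem_span_singleton.2 ⟨-1, by ring⟩
  simp [hX.pow_succ_eq, hX.one_sub.pow_succ_eq]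

theorem exists_isIdempotentElem_commute_isNilpotent_sub {R : Type*} [Ring R] {a : R}
    (ha : IsNilpotent (a - a ^ 2)) :
    ∃ e : R, IsIdempotentElem e ∧ Commute a e ∧ IsNilpotent (a - e) := by
  obtain ⟨n, hn⟩ := ha
  set P : ℤ[X] := 1 - (1 - X ^ (n + 1)) ^ (n + 1)
  obtain ⟨q, hq⟩ := X_sub_X_sq_dvd_X_sub_one_sub_one_sub_X_pow_pow n
  refine ⟨aeval a P, ?_, ?_, ?_⟩
  · simpa [P] using isIdempotentElem_one_sub_one_sub_pow_pow a (n + 1)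
      (pow_eq_zero_of_le n.le_succ hn)
  · simpa using (Commute.all (X : ℤ[X]) P).map (aeval a)
  · have hsub : a - aeval a P = (a - a ^ 2) * aeval a q := by
      simpa [P] using congr_arg (aeval a) hq
    rw [hsub]
    have hcomm := (Commute.all (X - X ^ 2 : ℤ[X]) q).map (aeval a)
    rw [map_sub, map_pow, aeval_X] at hcomm
    exact hcomm.isNilpotent_mul_right ⟨n, hn⟩

theorem isStronglyNilCleanElem_iff_isNilpotent_sub_sq {R : Type*} [Ring R] (a : R) :
    IsStronglyNilCleanElem a ↔ IsNilpotent (a - a ^ 2) := by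
  constructor
  · rintro ⟨e, q, he, hq, heq, rfl⟩
    have hqe : Commute q e := heq.symm
    have hsub : e + q - (e + q) ^ 2 = q * (1 - e - e - q) := by
      simp only [sq, add_mul, mul_add, mul_sub, mul_one, he.eq, heq]
      abel
    rw [hsub]
    exact (((Commute.one_right q).sub_right hqe).sub_right hqe |>.sub_right (.refl q))
      |>.isNilpotent_mul_right hq
  · intro ha
    obtain ⟨e, he, hae, hnil⟩ := exists_isIdempotentElem_commute_isNilpotent_sub ha
    refine ⟨e, a - e, he, hnil, ?_, (add_sub_cancel e a).symm⟩
    rw [mul_sub, sub_mul, hae.symm.eq]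

theorem isUnit_of_isUnit_mul_of_isUnit_mul_swap {M : Type*} [Monoid M] {a b : M}
    (hab : IsUnit (a * b)) (hba : IsUnit (b * a)) : IsUnit a :=
  isUnit_iff_exists_and_exists.2
    ⟨⟨b * ↑hab.unit⁻¹, by rw [← mul_assoc, hab.mul_val_inv]⟩,
      ⟨↑hba.unit⁻¹ * b, by rw [mul_assoc, hba.val_inv_mul]⟩⟩

section

variable {R S : Type*} [Ring R] [Ring S] (f : R →+* S)

theorem isNilpotent_of_isNilpotent_map_of_ker_isNilpotent
    (hf : ∀ x ∈ RingHom.ker f, IsNilpotent x) {x : R} (hx : IsNilpotent (f x)) :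
    IsNilpotent x := by
  obtain ⟨n, hn⟩ := hx
  obtain ⟨k, hk⟩ := hf (x ^ n) (by rwa [RingHom.mem_ker, map_pow])
  exact ⟨n * k, by rw [pow_mul, hk]⟩

theorem isUnit_of_isUnit_map_of_ker_isNilpotent (hsurj : Function.Surjective f)
    (hf : ∀ x ∈ RingHom.ker f, IsNilpotent x) {u : R} (hu : IsUnit (f u)) : IsUnit u := by
  have isUnit_of_map_eq_one (x : R) (hx : f x = 1) : IsUnit x := by
    simpa using (hf (x - 1) (by simp [RingHom.mem_ker, hx])).isUnit_one_add
  obtain ⟨v, hv⟩ := hsurj ↑hu.unit⁻¹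
  exact isUnit_of_isUnit_mul_of_isUnit_mul_swap
    (isUnit_of_map_eq_one _ (by rw [map_mul, hv, hu.mul_val_inv]))
    (isUnit_of_map_eq_one _ (by rw [map_mul, hv, hu.val_inv_mul]))

theorem IsCleanElem.map {a : R} (ha : IsCleanElem a) : IsCleanElem (f a) := by
  obtain ⟨e, u, he, hu, rfl⟩ := ha
  exact ⟨f e, f u, he.map f, hu.map f, map_add f e u⟩

theorem exists_isCleanElem_eq_of_ker_isNilpotent (hsurj : Function.Surjective f)
    (hf : ∀ x ∈ RingHom.ker f, IsNilpotent x) {b : S} (hb : IsCleanElem b) :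
    ∃ a : R, IsCleanElem a ∧ f a = b := by
  obtain ⟨e, u, he, hu, rfl⟩ := hb
  obtain ⟨e', he', rfl⟩ := exists_isIdempotentElem_eq_of_ker_isNilpotent f hf e (hsurj e) he
  obtain ⟨u', rfl⟩ := hsurj u
  exact ⟨e' + u', ⟨e', u', he', isUnit_of_isUnit_map_of_ker_isNilpotent f hsurj hf hu, rfl⟩,
    map_add f e' u'⟩

theorem isCSNCRing_iff_of_surjective_of_ker_isNilpotent (hsurj : Function.Surjective f)
    (hf : ∀ x ∈ RingHom.ker f, IsNilpotent x) : IsCSNCRing R ↔ IsCSNCRing S := by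
  simp only [IsCSNCRing, isStronglyNilCleanElem_iff_isNilpotent_sub_sq]
  constructor
  · intro hR b hb
    obtain ⟨a, ha, rfl⟩ := exists_isCleanElem_eq_of_ker_isNilpotent f hsurj hf hb
    simpa using (hR a ha).map f
  · intro hS a ha
    refine isNilpotent_of_isNilpotent_map_of_ker_isNilpotent f hf ?_
    simpa using hS (f a) (ha.map f)

end

theorem stmt_12 (R : Type*) [Ring R] (I : TwoSidedIdeal R)
    (hI : ∀ x ∈ I, IsNilpotent x) :
    IsCSNCRing R ↔ IsCSNCRing I.ringCon.Quotient := by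
  refine isCSNCRing_iff_of_surjective_of_ker_isNilpotent _ I.ringCon.mk'_surjective fun x hx ↦ ?_
  exact hI x ((RingCon.eq _).1 ((RingHom.mem_ker.1 hx).trans (map_zero I.ringCon.mk').symm))
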